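/- Let ν > 1 and A > 0, set x_c = (A·ν)^{−1/(ν−1)} and μ_max = x_c − A·x_c^ν. Then μ_max > 0, and for every μ ∈ (0, μ_max) there exists x* ∈ (0, x_c) with A·(x*)^ν + μ = x*; moreover every such fixed point x* ∈ (0, x_c) satisfies A·ν·(x*)^{ν−1} < 1, i.e., it is a linearly stable fixed point of the map P(x) = A·x^ν + μ. -/

import Mathlib

/-!
The point `x_c` is where the multiplier `P'(x) = A ν x^(ν-1)` of `P(x) = A x^ν + μ` equals `1`.
There `A x_c^ν = x_c / ν < x_c`, so `μ_max > 0`, and the intermediate value theorem applied to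
`x - A x^ν`, which runs from `0` to `μ_max` on `[0, x_c]`, gives a fixed point in `(0, x_c)`.
Since `P'` is increasing, every point below `x_c`, fixed or not, has multiplier below `1`.
-/

open Set Real

theorem rpow_neg_one_div_sub_one_rpow_sub_one {a ν : ℝ} (ha : 0 ≤ a) (hν : ν ≠ 1) :
    (a ^ (-(1 / (ν - 1)))) ^ (ν - 1) = a⁻¹ := by
  rw [← rpow_mul ha, neg_mul, one_div_mul_cancel (sub_ne_zero.2 hν), rpow_neg_one]

theorem exists_mem_Ioo_mul_rpow_add_eq_self {A ν c μ : ℝ} (hν : 0 < ν) (hc : 0 ≤ c)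
    (hμ : μ ∈ Ioo 0 (c - A * c ^ ν)) : ∃ x ∈ Ioo 0 c, A * x ^ ν + μ = x := by
  have hcont : ContinuousOn (fun x : ℝ => x - A * x ^ ν) (Icc 0 c) :=
    (continuous_id.sub (continuous_const.mul (continuous_rpow_const hν.le))).continuousOn
  obtain ⟨x, hx, hfx⟩ :=
    intermediate_value_Ioo hc hcont (by simpa [zero_rpow hν.ne'] using hμ)
  exact ⟨x, hx, by linarith [hfx]⟩

section Critical

variable {A ν c : ℝ}

theorem mul_rpow_eq_div_of_mul_rpow_sub_one_eq_one (hc0 : 0 < c)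
    (hc : A * ν * c ^ (ν - 1) = 1) : A * c ^ ν = c / ν := by
  have hν : ν ≠ 0 := by
    rintro rfl
    simp at hc
  rw [rpow_sub_one hc0.ne'] at hc
  field_simp at hc ⊢
  linarith

theorem sub_mul_rpow_pos_of_mul_rpow_sub_one_eq_one (hν : 1 < ν) (hc0 : 0 < c)
    (hc : A * ν * c ^ (ν - 1) = 1) : 0 < c - A * c ^ ν := by
  rw [mul_rpow_eq_div_of_mul_rpow_sub_one_eq_one hc0 hc, sub_pos]
  exact div_lt_self hc0 hν

theorem mul_rpow_sub_one_lt_one_of_lt (hν : 1 < ν) (hA : 0 < A)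
    (hc : A * ν * c ^ (ν - 1) = 1) {x : ℝ} (hx : x ∈ Ico 0 c) : A * ν * x ^ (ν - 1) < 1 := by
  have hAν : 0 < A * ν := by positivity
  exact (mul_lt_mul_of_pos_left (rpow_lt_rpow hx.1 hx.2 (sub_pos.2 hν)) hAν).trans_eq hc

end Critical

/-- For the return map `P(x) = A·x^ν + μ` with `ν > 1`, `A > 0`: setting
`x_c = (A·ν)^{−1/(ν−1)}` and `μ_max = x_c − A·x_c^ν`, we have `μ_max > 0`, and for
every `μ ∈ (0, μ_max)` there is a fixed point `x* ∈ (0, x_c)` of `P`; moreover every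
such fixed point satisfies `A·ν·(x*)^{ν−1} < 1`, i.e. it is linearly stable. -/
theorem stable_fixed_point_of_return_map (ν A : ℝ) (hν : 1 < ν) (hA : 0 < A) :
    0 < (A * ν) ^ (-(1 / (ν - 1))) - A * ((A * ν) ^ (-(1 / (ν - 1)))) ^ ν ∧
    ∀ μ ∈ Ioo (0 : ℝ)
        ((A * ν) ^ (-(1 / (ν - 1))) - A * ((A * ν) ^ (-(1 / (ν - 1)))) ^ ν),
      (∃ x ∈ Ioo (0 : ℝ) ((A * ν) ^ (-(1 / (ν - 1)))), A * x ^ ν + μ = x) ∧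
      ∀ x ∈ Ioo (0 : ℝ) ((A * ν) ^ (-(1 / (ν - 1)))),
        A * x ^ ν + μ = x → A * ν * x ^ (ν - 1) < 1 := by
  have hAν : 0 < A * ν := by positivity
  set c := (A * ν) ^ (-(1 / (ν - 1)))
  have hc0 : 0 < c := rpow_pos_of_pos hAν _
  have hcrit : A * ν * c ^ (ν - 1) = 1 := by
    rw [rpow_neg_one_div_sub_one_rpow_sub_one hAν.le hν.ne', mul_inv_cancel₀ hAν.ne']
  refine ⟨sub_mul_rpow_pos_of_mul_rpow_sub_one_eq_one hν hc0 hcrit, fun μ hμ => ⟨?_, ?_⟩⟩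
  · exact exists_mem_Ioo_mul_rpow_add_eq_self (by linarith) hc0.le hμ
  · exact fun x hx _ => mul_rpow_sub_one_lt_one_of_lt hν hA hcrit (Ioo_subset_Ico_self hx)
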